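/- Let φ_1,…,φ_r be symmetric polynomials of the shape φ_j(z) = a_j σ_{k_j}(z) − Σ_{l < k_j, l ∈ R} b_{jl} σ_l(z) with a_j nonzero integers and b_{jl} integers. Suppose x, y ∈ ℤ^k satisfy φ_j(x) = φ_j(y) for 1 ≤ j ≤ r, and set h_l = σ_l(x) − σ_l(y) for l ∈ R. Then for each index j with 1 ≤ j ≤ k one has A·∏_{i=1}^k (x_i − y_j) = Ψ(−y_j; h). -/

import Mathlib

open Finset Asymptotics Filter

/-- The elementary symmetric polynomial `σ_l` evaluated at the integer tuple `x`. -/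
def esymm (k l : ℕ) (x : Fin k → ℤ) : ℤ :=
  ∑ s ∈ Finset.powersetCard l (Finset.univ : Finset (Fin k)), ∏ i ∈ s, x i

/-- The number of pairs `(x, y)` of integer `k`-tuples with all entries in `[1, X]`
satisfying the relation `P`. -/
noncomputable def pairCount (k X : ℕ) (P : (Fin k → ℤ) → (Fin k → ℤ) → Prop) : ℕ :=
  Nat.card {p : (Fin k → ℤ) × (Fin k → ℤ) //
    (∀ i, 1 ≤ p.1 i ∧ p.1 i ≤ (X : ℤ)) ∧ (∀ i, 1 ≤ p.2 i ∧ p.2 i ≤ (X : ℤ)) ∧ P p.1 p.2}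

/-- `T_k(X)`: the number of pairs `(x, y)` of integer `k`-tuples with entries in `[1, X]`
for which `y` is a permutation of `x`. -/
noncomputable def permCount (k X : ℕ) : ℕ :=
  pairCount k X (fun x y => ∃ π : Equiv.Perm (Fin k), y = x ∘ π)

/-- The complementary set of exponents `ℛ = {1,…,k} \ {k_1,…,k_r}`. -/
def compSet (k r : ℕ) (kk : Fin r → ℕ) : Finset ℕ :=
  Finset.Icc 1 k \ Finset.image kk Finset.univ

/-- The auxiliary polynomial `Ψ(t; h) = Σ_{l∈ℛ} h_l ψ_l(t)`, where
`ψ_l(t) = A t^{k−l} + Σ_{j : k_j > l} c_j b_{jl} t^{k−k_j}`, `A = a_1 ⋯ a_r` and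
`c_j = A / a_j`. -/
def Psi (k r : ℕ) (kk : Fin r → ℕ) (a : Fin r → ℤ) (b : Fin r → ℕ → ℤ)
    (h : ℕ → ℤ) (t : ℤ) : ℤ :=
  ∑ l ∈ compSet k r kk, h l *
    ((∏ j, a j) * t ^ (k - l) +
      ∑ j ∈ Finset.univ.filter (fun j => l < kk j),
        (∏ i ∈ Finset.univ.erase j, a i) * b j l * t ^ (k - kk j))

/-!
Subtracting the expansions `∏ (z_i + t) = Σ_l σ_l(z) t^{k-l}` for `z = x` and `z = y` at
`t = -y_j`, where the `y`-product vanishes, gives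
`∏ (x_i - y_j) = Σ_{1 ≤ l ≤ k} (σ_l(x) - σ_l(y)) (-y_j)^{k-l}`. After multiplying by `A`, each
term with `l = k_j` is rewritten through `φ_j(x) = φ_j(y)` as
`A (σ_{k_j}(x) - σ_{k_j}(y)) = Σ_{l ∈ R, l < k_j} c_j b_{jl} h_l`, and collecting the
coefficient of each `h_l` yields `Ψ(-y_j; h)`.
-/

lemma prod_add_eq_sum_esymm (k : ℕ) (x : Fin k → ℤ) (t : ℤ) :
    ∏ i, (x i + t) = ∑ l ∈ range (k + 1), esymm k l x * t ^ (k - l) := by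
  rw [prod_add, sum_powerset]
  simp only [card_univ, Fintype.card_fin]
  refine sum_congr rfl fun l _ => ?_
  rw [esymm, sum_mul]
  refine sum_congr rfl fun s hs => ?_
  rw [prod_const, card_sdiff_of_subset (subset_univ s), card_univ, Fintype.card_fin,
    (mem_powersetCard.mp hs).2]

lemma esymm_zero (k : ℕ) (x : Fin k → ℤ) : esymm k 0 x = 1 := by
  simp [esymm]

lemma prod_add_sub_prod_add_eq_sum_esymm (k : ℕ) (x y : Fin k → ℤ) (t : ℤ) :
    ∏ i, (x i + t) - ∏ i, (y i + t) =
      ∑ l ∈ Icc 1 k, (esymm k l x - esymm k l y) * t ^ (k - l) := by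
  have hrange : range (k + 1) = insert 0 (Icc 1 k) := by
    ext n; simp only [mem_range, mem_insert, mem_Icc]; omega
  rw [prod_add_eq_sum_esymm, prod_add_eq_sum_esymm, ← sum_sub_distrib, hrange,
    sum_insert (by simp), esymm_zero, esymm_zero, sub_self, zero_add]
  exact sum_congr rfl fun l _ => (sub_mul _ _ _).symm

lemma prod_sub_eq_sum_esymm_sub (k : ℕ) (x y : Fin k → ℤ) (j : Fin k) :
    ∏ i, (x i - y j) = ∑ l ∈ Icc 1 k, (esymm k l x - esymm k l y) * (-y j) ^ (k - l) := by
  have hy : ∏ i, (y i - y j) = 0 := prod_eq_zero (mem_univ j) (sub_self _)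
  simpa only [hy, sub_zero, ← sub_eq_add_neg] using
    prod_add_sub_prod_add_eq_sum_esymm k x y (-y j)

lemma image_subset_Icc_of_strictMono {k r : ℕ} (hr : 0 < r) {kk : Fin r → ℕ}
    (hmono : StrictMono kk) (hfirst : 1 ≤ kk ⟨0, hr⟩)
    (hlast : kk ⟨r - 1, Nat.sub_lt hr Nat.one_pos⟩ = k) :
    image kk univ ⊆ Icc 1 k := by
  simp only [subset_iff, mem_image, mem_univ, true_and, mem_Icc, forall_exists_index,
    forall_apply_eq_imp_iff]
  refine fun i => ⟨hfirst.trans (hmono.monotone (Nat.zero_le _)), hlast ▸ hmono.monotone ?_⟩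
  exact Nat.le_sub_one_of_lt i.isLt

lemma sum_Icc_eq_sum_compSet_add_sum {M : Type*} [AddCommMonoid M] {k r : ℕ} (hr : 0 < r)
    {kk : Fin r → ℕ} (hmono : StrictMono kk) (hfirst : 1 ≤ kk ⟨0, hr⟩)
    (hlast : kk ⟨r - 1, Nat.sub_lt hr Nat.one_pos⟩ = k) (f : ℕ → M) :
    ∑ l ∈ Icc 1 k, f l = ∑ l ∈ compSet k r kk, f l + ∑ j, f (kk j) := by
  rw [compSet, ← sum_sdiff (image_subset_Icc_of_strictMono hr hmono hfirst hlast),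
    sum_image fun i _ i' _ h => hmono.injective h]

lemma mul_sub_eq_sum_mul_sub_of_sub_eq_sub {R ι : Type*} [CommRing R] {s : Finset ι}
    {a u u' : R} {c v v' : ι → R}
    (h : a * u - ∑ l ∈ s, c l * v l = a * u' - ∑ l ∈ s, c l * v' l) :
    a * (u - u') = ∑ l ∈ s, c l * (v l - v' l) := by
  simp only [mul_sub, sum_sub_distrib]
  linear_combination h

lemma prod_mul_eq_sum_prod_erase_mul {R ι κ : Type*} [CommRing R] [Fintype ι] [DecidableEq ι]
    {a : ι → R} {j : ι} {D : R} {s : Finset κ} {c d : κ → R}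
    (h : a j * D = ∑ l ∈ s, c l * d l) :
    (∏ i, a i) * D = ∑ l ∈ s, (∏ i ∈ univ.erase j, a i) * c l * d l := by
  simp only [← prod_erase_mul _ _ (mem_univ j), mul_assoc, h, mul_sum]

theorem multiplicative_relation_evaluated_general (k r : ℕ) (hr : 0 < r) (kk : Fin r → ℕ)
    (hmono : StrictMono kk) (hfirst : 1 ≤ kk ⟨0, hr⟩)
    (hlast : kk ⟨r - 1, Nat.sub_lt hr Nat.one_pos⟩ = k)
    (a : Fin r → ℤ) (b : Fin r → ℕ → ℤ)
    (x y : Fin k → ℤ)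
    (heq : ∀ j,
      a j * esymm k (kk j) x
          - ∑ l ∈ (compSet k r kk).filter (fun l => l < kk j), b j l * esymm k l x =
        a j * esymm k (kk j) y
          - ∑ l ∈ (compSet k r kk).filter (fun l => l < kk j), b j l * esymm k l y)
    (h : ℕ → ℤ) (hh : ∀ l ∈ compSet k r kk, h l = esymm k l x - esymm k l y) :
    ∀ j : Fin k,
      (∏ i, a i) * (∏ i, (x i - y j)) = Psi k r kk a b h (-(y j)) := by
  intro j
  have hkk : ∀ j', (∏ i, a i) * (esymm k (kk j') x - esymm k (kk j') y) =
      ∑ l ∈ (compSet k r kk).filter (fun l => l < kk j'),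
        (∏ i ∈ univ.erase j', a i) * b j' l * (esymm k l x - esymm k l y) :=
    fun j' => prod_mul_eq_sum_prod_erase_mul (mul_sub_eq_sum_mul_sub_of_sub_eq_sub (heq j'))
  rw [prod_sub_eq_sum_esymm_sub, sum_Icc_eq_sum_compSet_add_sum hr hmono hfirst hlast, mul_add,
    mul_sum, mul_sum]
  simp only [← mul_assoc, hkk, sum_mul, sum_filter]
  rw [sum_comm (s := univ), ← sum_add_distrib, Psi]
  refine sum_congr rfl fun l hl => ?_
  rw [hh l hl, mul_add, sum_filter, mul_sum]
  congr 1
  · ring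
  · exact sum_congr rfl fun j' _ => by split_ifs <;> ring

/-- The relation (2.8). If `x, y ∈ ℤ^k` satisfy `φ_j(x) = φ_j(y)` for `1 ≤ j ≤ r`, where
`φ_j(z) = a_j σ_{k_j}(z) − Σ_{l < k_j, l ∈ ℛ} b_{jl} σ_l(z)`, and `h_l = σ_l(x) − σ_l(y)`
for `l ∈ ℛ`, then `A ∏_{i=1}^k (x_i − y_j) = Ψ(−y_j; h)` for each `1 ≤ j ≤ k`. -/
theorem multiplicative_relation_evaluated (k r : ℕ) (hr : 0 < r) (kk : Fin r → ℕ)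
    (hmono : StrictMono kk) (hfirst : 1 ≤ kk ⟨0, hr⟩)
    (hlast : kk ⟨r - 1, Nat.sub_lt hr Nat.one_pos⟩ = k)
    (a : Fin r → ℤ) (ha : ∀ j, a j ≠ 0) (b : Fin r → ℕ → ℤ)
    (x y : Fin k → ℤ)
    (heq : ∀ j,
      a j * esymm k (kk j) x
          - ∑ l ∈ (compSet k r kk).filter (fun l => l < kk j), b j l * esymm k l x =
        a j * esymm k (kk j) y
          - ∑ l ∈ (compSet k r kk).filter (fun l => l < kk j), b j l * esymm k l y)
    (h : ℕ → ℤ) (hh : ∀ l ∈ compSet k r kk, h l = esymm k l x - esymm k l y) :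
    ∀ j : Fin k,
      (∏ i, a i) * (∏ i, (x i - y j)) = Psi k r kk a b h (-(y j)) :=
  multiplicative_relation_evaluated_general k r hr kk hmono hfirst hlast a b x y heq h hh
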